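/- arXiv:1611.10105 — 3 statements merged into one kernel-verified Lean document; each statement's English description precedes it below -/
import Mathlib

section
/- Let A ⊆ ℝⁿ be a nonempty closed convex set with A ≠ ℝⁿ. Let z₀ ∈ A and R > 0 be such that 𝒞_R(z₀) ⊆ A, and let z̄ ∈ ∂A satisfy ‖z̄ − z₀‖_𝒞 = R. Then for every t ∈ (−∞, R), setting z_t := z₀ + ((R−t)/R)(z̄ − z₀), one has: (i) 𝒞_{R−t}(z₀) ⊆ {x ∈ ℝⁿ : d_A(x) ≥ t}; (ii) ‖z_t − z₀‖_𝒞 = R − t; and (iii) d_A(z_t) = t. -/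
open MeasureTheory Set Metric Filter
open scoped Pointwise Classical

/-- The signed distance to `A` measured in the gauge norm of the convex body `C`:
`d_A(x) = dist(x, ∂A)` for `x ∈ A` and `d_A(x) = −dist(x, ∂A)` for `x ∉ A`. -/
noncomputable def signedDistC {n : ℕ} (C A : Set (EuclideanSpace ℝ (Fin n)))
    (x : EuclideanSpace ℝ (Fin n)) : ℝ :=
  if x ∈ A then sInf ((fun z => gauge C (z - x)) '' frontier A)
  else -sInf ((fun z => gauge C (z - x)) '' frontier A)

/-!
Write `p` for the gauge of `C`, a continuous seminorm, and `B(y, r)` for its open balls. As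
`B(z₀, R)` is open and contained in `A`, frontier points of `A` are at `p`-distance at least `R`
from `z₀`. For `x ∈ A` with `p(x - z₀) ≤ R - t` the triangle inequality then gives `d_A(x) ≥ t`;
for `x ∉ A` the same bound comes from a point of `∂A` on the segment `[z₀, x]`, along which
`p`-distances add up. Since `p(z̄ - z_t) = |t|`, this settles `d_A(z_t) = t` for `t ≥ 0`. For
`t < 0`, if some `z ∈ A` had `p(z - z_t) < -t`, the homothety centred at `z` of ratio
`-t / (R - t)` would map `B(z₀, R)`, by convexity, onto a ball inside `A` containing `z̄`, which
is impossible; taking `z = z_t` shows in particular that `z_t ∉ A`.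
-/

theorem IsPreconnected.inter_frontier_nonempty {X : Type*} [TopologicalSpace X] {s t : Set X}
    (hs : IsPreconnected s) (hst : (s ∩ t).Nonempty) (hst' : (s \ t).Nonempty) :
    (s ∩ frontier t).Nonempty := by
  by_contra h
  have hcover : s ⊆ interior t ∪ interior tᶜ := by
    rw [← compl_frontier_eq_union_interior]
    exact fun x hx hxf => h ⟨x, hx, hxf⟩
  rcases hs.subset_or_subset isOpen_interior isOpen_interior
      (disjoint_compl_right.mono interior_subset interior_subset) hcover with hsub | hsub
  · obtain ⟨x, hxs, hxt⟩ := hst'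
    exact hxt (interior_subset (hsub hxs))
  · obtain ⟨x, hxs, hxt⟩ := hst
    exact interior_subset (hsub hxs) hxt

namespace Seminorm

variable {E : Type*} [AddCommGroup E] [Module ℝ E] (p : Seminorm ℝ E)

theorem map_add_smul_sub_self (x v : E) {c : ℝ} (hc : 0 ≤ c) : p (x + c • v - x) = c * p v := by
  rw [add_sub_cancel_left, map_smul_eq_mul, Real.norm_of_nonneg hc]

theorem map_sub_add_map_sub_of_mem_segment {x y z : E} (hz : z ∈ segment ℝ x y) :
    p (y - z) + p (z - x) = p (y - x) := by
  rw [segment_eq_image'] at hz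
  obtain ⟨θ, ⟨hθ₀, hθ₁⟩, rfl⟩ := hz
  have hy : y - (x + θ • (y - x)) = (1 - θ) • (y - x) := by module
  rw [hy, p.map_add_smul_sub_self x _ hθ₀, map_smul_eq_mul, Real.norm_of_nonneg (by linarith)]
  ring

theorem ball_homothety_subset {A : Set E} (hA : Convex ℝ A) {z z₀ : E} (hz : z ∈ A) {R θ : ℝ}
    (hball : p.ball z₀ R ⊆ A) (hθ₀ : 0 ≤ θ) (hθ₁ : θ < 1) :
    p.ball (θ • z + (1 - θ) • z₀) ((1 - θ) * R) ⊆ A := by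
  intro y hy
  have hθ : 0 < 1 - θ := by linarith
  set w := z₀ + (1 - θ)⁻¹ • (y - (θ • z + (1 - θ) • z₀))
  have hw : w ∈ p.ball z₀ R := by
    rw [mem_ball, p.map_add_smul_sub_self _ _ (inv_nonneg.2 hθ.le), inv_mul_lt_iff₀ hθ]
    exact hy
  have hyw : y = θ • z + (1 - θ) • w := by
    simp only [w, smul_add, smul_smul, mul_inv_cancel₀ hθ.ne', one_smul]
    abel
  rw [hyw]
  exact hA hz (hball hw) hθ₀ hθ.le (by ring)

theorem gaugeSeminorm_ball_subset_vadd_smul {C : Set E} (hb : Balanced ℝ C) (hc : Convex ℝ C)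
    (ha : Absorbent ℝ C) (x : E) {r : ℝ} (hr : 0 < r) :
    (gaugeSeminorm hb hc ha).ball x r ⊆ x +ᵥ r • C := by
  have hball_one : (gaugeSeminorm hb hc ha).ball 0 1 ⊆ C := by
    rw [ball_zero_eq]
    exact setOfPred_gauge_lt_one_subset_self hc ha.zero_mem ha
  calc (gaugeSeminorm hb hc ha).ball x r = x +ᵥ (gaugeSeminorm hb hc ha).ball 0 r := by
        rw [vadd_ball, vadd_eq_add, add_zero]
    _ = x +ᵥ r • (gaugeSeminorm hb hc ha).ball 0 1 := by
        rw [smul_ball_zero hr.ne', Real.norm_of_nonneg hr.le, mul_one]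
    _ ⊆ x +ᵥ r • C := vadd_set_mono (smul_set_mono hball_one)

variable [TopologicalSpace E]

noncomputable def frontierDist (A : Set E) (x : E) : ℝ :=
  sInf ((fun z => p (z - x)) '' frontier A)

-- For `p = gaugeSeminorm _ _ _` this is definitionally `signedDistC`.
noncomputable def signedDist (A : Set E) (x : E) : ℝ :=
  if x ∈ A then p.frontierDist A x else -p.frontierDist A x

variable {A : Set E} {x z z₀ : E} {R t : ℝ}

theorem frontierDist_nonneg : 0 ≤ p.frontierDist A x :=
  Real.sInf_nonneg (by rintro _ ⟨z, -, rfl⟩; exact apply_nonneg p _)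

theorem frontierDist_le (hz : z ∈ frontier A) : p.frontierDist A x ≤ p (z - x) :=
  csInf_le ⟨0, by rintro _ ⟨z, -, rfl⟩; exact apply_nonneg p _⟩ ⟨z, hz, rfl⟩

theorem signedDist_le_frontierDist : p.signedDist A x ≤ p.frontierDist A x := by
  unfold signedDist
  split_ifs
  · exact le_rfl
  · linarith [p.frontierDist_nonneg (A := A) (x := x)]

variable [IsTopologicalAddGroup E]

theorem le_map_sub_of_notMem_interior (hp : Continuous p) (hball : p.ball z₀ R ⊆ A)
    (hz : z ∉ interior A) : R ≤ p (z - z₀) := by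
  by_contra! h
  have hopen : IsOpen (p.ball z₀ R) :=
    isOpen_lt (hp.comp (continuous_id.sub continuous_const)) continuous_const
  exact hz (interior_maximal hball hopen (p.mem_ball.2 h))

theorem le_frontierDist (hp : Continuous p) (hne : (frontier A).Nonempty)
    (hball : p.ball z₀ R ⊆ A) (hx : p (x - z₀) ≤ R - t) : t ≤ p.frontierDist A x := by
  refine le_csInf (hne.image _) ?_
  rintro _ ⟨z, hz, rfl⟩
  have hR : R ≤ p (z - z₀) := p.le_map_sub_of_notMem_interior hp hball hz.2
  have htri : p (z - z₀) ≤ p (z - x) + p (x - z₀) := by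
    simpa only [sub_add_sub_cancel] using map_add_le_add p (z - x) (x - z₀)
  linarith

theorem mul_le_map_sub_of_mem_ray (hp : Continuous p) (hA : Convex ℝ A)
    (hball : p.ball z₀ R ⊆ A) {zbar : E} (hzbar : zbar ∉ interior A) {s : ℝ} (hs : 1 < s)
    (hz : z ∈ A) : (s - 1) * R ≤ p (z - (z₀ + s • (zbar - z₀))) := by
  set y := z₀ + s • (zbar - z₀)
  have hs₀ : 0 < s := by linarith
  have hθ₁ : s⁻¹ < 1 := inv_lt_one_of_one_lt₀ hs
  have hzbar_eq : zbar - (s⁻¹ • z + (1 - s⁻¹) • z₀) = s⁻¹ • (y - z) := by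
    simp only [y, smul_sub, smul_add, smul_smul, inv_mul_cancel₀ hs₀.ne', one_smul]
    module
  have hfar := p.le_map_sub_of_notMem_interior hp
    (p.ball_homothety_subset hA hz hball (inv_nonneg.2 hs₀.le) hθ₁) hzbar
  rw [hzbar_eq, map_smul_eq_mul, Real.norm_of_nonneg (inv_nonneg.2 hs₀.le), map_sub_rev,
    inv_mul_eq_div, le_div_iff₀ hs₀] at hfar
  calc (s - 1) * R = (1 - s⁻¹) * R * s := by field_simp
    _ ≤ p (z - y) := hfar

variable [ContinuousSMul ℝ E]

theorem frontierDist_le_of_notMem (hp : Continuous p) (hz₀ : z₀ ∈ A) (hx : x ∉ A)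
    (hball : p.ball z₀ R ⊆ A) : p.frontierDist A x ≤ p (x - z₀) - R := by
  obtain ⟨z, hzseg, hz⟩ := (convex_segment z₀ x).isPreconnected.inter_frontier_nonempty
    ⟨z₀, left_mem_segment ℝ z₀ x, hz₀⟩ ⟨x, right_mem_segment ℝ z₀ x, hx⟩
  have hR : R ≤ p (z - z₀) := p.le_map_sub_of_notMem_interior hp hball hz.2
  have hsum := p.map_sub_add_map_sub_of_mem_segment hzseg
  have hdist := p.frontierDist_le (x := x) hz
  rw [map_sub_rev] at hdist
  linarith

theorem le_signedDist (hp : Continuous p) (hne : (frontier A).Nonempty) (hz₀ : z₀ ∈ A)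
    (hball : p.ball z₀ R ⊆ A) (hx : p (x - z₀) ≤ R - t) : t ≤ p.signedDist A x := by
  unfold signedDist
  split_ifs with hxA
  · exact p.le_frontierDist hp hne hball hx
  · linarith [p.frontierDist_le_of_notMem hp hz₀ hxA hball]

theorem signedDist_eq_of_mem_ray (hp : Continuous p) (hA : Convex ℝ A) (hAcl : IsClosed A)
    (hz₀ : z₀ ∈ A) (hR : 0 < R) (hball : p.ball z₀ R ⊆ A) {zbar : E} (hzbar : zbar ∈ frontier A)
    (hgauge : p (zbar - z₀) = R) (ht : t < R) :
    p.signedDist A (z₀ + ((R - t) / R) • (zbar - z₀)) = t := by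
  set zt := z₀ + ((R - t) / R) • (zbar - z₀)
  have hzt : p (zt - z₀) = R - t := by
    rw [p.map_add_smul_sub_self _ _ (div_nonneg (by linarith) hR.le), hgauge]
    field_simp
  refine le_antisymm ?_ (p.le_signedDist hp ⟨zbar, hzbar⟩ hz₀ hball hzt.le)
  rcases le_or_gt 0 t with ht₀ | ht₀
  · have hzbar_zt : zbar - zt = (t / R) • (zbar - z₀) := by
      simp only [zt]
      rw [sub_div, div_self hR.ne']
      module
    calc p.signedDist A zt ≤ p.frontierDist A zt := p.signedDist_le_frontierDist
      _ ≤ p (zbar - zt) := p.frontierDist_le hzbar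
      _ = t := by
        rw [hzbar_zt, map_smul_eq_mul, Real.norm_of_nonneg (div_nonneg ht₀ hR.le), hgauge]
        field_simp
  · have hs : 1 < (R - t) / R := by rw [one_lt_div hR]; linarith
    have hfar : ∀ z ∈ A, -t ≤ p (z - zt) := fun z hz => by
      have := p.mul_le_map_sub_of_mem_ray hp hA hball hzbar.2 hs hz
      rwa [sub_one_mul, div_mul_cancel₀ _ hR.ne', sub_sub_cancel_left] at this
    have hzt_notMem : zt ∉ A := fun h => by
      have := hfar zt h
      rw [sub_self, map_zero] at this
      linarith
    have hdist : -t ≤ p.frontierDist A zt :=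
      le_csInf ⟨_, zbar, hzbar, rfl⟩ fun _ ⟨z, hz, hzt⟩ => hzt ▸ hfar z (hAcl.frontier_subset hz)
    rw [signedDist, if_neg hzt_notMem]
    linarith

end Seminorm

theorem touching_level_sets_by_spheres_general
    (n : ℕ)
    -- the convex body 𝒞
    (C : Set (EuclideanSpace ℝ (Fin n)))
    (hCconv : Convex ℝ C) (hCeven : -C = C)
    (hC0 : (0 : EuclideanSpace ℝ (Fin n)) ∈ interior C)
    -- the convex set A
    (A : Set (EuclideanSpace ℝ (Fin n))) (hAcl : IsClosed A)
    (hAconv : Convex ℝ A)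
    -- the inner touching ball
    (z₀ : EuclideanSpace ℝ (Fin n)) (hz₀ : z₀ ∈ A)
    (R : ℝ) (hR : 0 < R) (hball : z₀ +ᵥ R • C ⊆ A)
    (zbar : EuclideanSpace ℝ (Fin n)) (hzbar : zbar ∈ frontier A)
    (hgauge : gauge C (zbar - z₀) = R) :
    ∀ t : ℝ, t < R →
      (z₀ +ᵥ (R - t) • C ⊆ {x : EuclideanSpace ℝ (Fin n) | t ≤ signedDistC C A x}) ∧
      gauge C ((z₀ + ((R - t) / R) • (zbar - z₀)) - z₀) = R - t ∧
      signedDistC C A (z₀ + ((R - t) / R) • (zbar - z₀)) = t := by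
  intro t ht
  have hCnhds : C ∈ nhds 0 := mem_interior_iff_mem_nhds.1 hC0
  have hCbal : Balanced ℝ C :=
    (balanced_iff_neg_mem hCconv).2 fun x hx => by rwa [← hCeven, Set.mem_neg, neg_neg]
  set p := gaugeSeminorm hCbal hCconv (absorbent_nhds_zero hCnhds)
  have hp : Continuous p := continuous_gauge hCconv hCnhds
  have hpball : p.ball z₀ R ⊆ A :=
    (Seminorm.gaugeSeminorm_ball_subset_vadd_smul hCbal hCconv _ z₀ hR).trans hball
  refine ⟨?_, ?_, p.signedDist_eq_of_mem_ray hp hAconv hAcl hz₀ hR hpball hzbar hgauge ht⟩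
  · rintro _ ⟨w, hw, rfl⟩
    refine p.le_signedDist hp ⟨zbar, hzbar⟩ hz₀ hpball ?_
    simpa [p] using gauge_le_of_mem (by linarith) hw
  · calc gauge C (z₀ + ((R - t) / R) • (zbar - z₀) - z₀) = (R - t) / R * gauge C (zbar - z₀) :=
          p.map_add_smul_sub_self z₀ (zbar - z₀) (div_nonneg (by linarith) hR.le)
      _ = R - t := by rw [hgauge]; field_simp

/-- touching the level sets of the signed distance function by concentric
anisotropic spheres. -/
theorem touching_level_sets_by_spheres
    (n : ℕ) (hn : 2 ≤ n)
    -- the convex body 𝒞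
    (C : Set (EuclideanSpace ℝ (Fin n)))
    (hCcomp : IsCompact C) (hCconv : Convex ℝ C) (hCeven : -C = C)
    (hC0 : (0 : EuclideanSpace ℝ (Fin n)) ∈ interior C)
    (ρ ρ' : ℝ) (hρ : 0 < ρ) (hρρ' : ρ < ρ')
    (hCin : ∀ p ∈ frontier C, ∃ c, p ∈ Metric.sphere c ρ ∧ Metric.closedBall c ρ ⊆ C)
    (hCout : ∀ p ∈ frontier C, ∃ c', p ∈ Metric.sphere c' ρ' ∧ C ⊆ Metric.closedBall c' ρ')
    -- the convex set A
    (A : Set (EuclideanSpace ℝ (Fin n))) (hAne : A.Nonempty) (hAcl : IsClosed A)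
    (hAconv : Convex ℝ A) (hAproper : A ≠ Set.univ)
    -- the inner touching ball
    (z₀ : EuclideanSpace ℝ (Fin n)) (hz₀ : z₀ ∈ A)
    (R : ℝ) (hR : 0 < R) (hball : z₀ +ᵥ R • C ⊆ A)
    (zbar : EuclideanSpace ℝ (Fin n)) (hzbar : zbar ∈ frontier A)
    (hgauge : gauge C (zbar - z₀) = R) :
    ∀ t : ℝ, t < R →
      (z₀ +ᵥ (R - t) • C ⊆ {x : EuclideanSpace ℝ (Fin n) | t ≤ signedDistC C A x}) ∧
      gauge C ((z₀ + ((R - t) / R) • (zbar - z₀)) - z₀) = R - t ∧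
      signedDistC C A (z₀ + ((R - t) / R) • (zbar - z₀)) = t :=
  touching_level_sets_by_spheres_general n C hCconv hCeven hC0 A hAcl hAconv z₀ hz₀ R hR hball zbar
    hzbar hgauge
end

section
/- For every r > 0 there exists δ > 0, depending only on n, s, the ellipticity constants λ, Λ, and r, such that the following holds: for every a > 0 and every bounded w ∈ C¹(ℝⁿ) satisfying Lw(x) ≥ a for all x ∈ B_r with w(x) ≤ 0, and w(x) ≥ −δa for all x ∈ ℝⁿ, one has w(x) > 0 for every x in the closed ball of radius r/2 centered at 0. -/
open MeasureTheory Set Metric Filter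

/-- The integro-differential operator `Lu(x) = ∫ (u(x) - u(x+y)) μ(y/|y|) |y|^{-(n+s)} dy`. -/
noncomputable def opLmu (n : ℕ) (s : ℝ) (μ : EuclideanSpace ℝ (Fin n) → ℝ)
    (u : EuclideanSpace ℝ (Fin n) → ℝ) (x : EuclideanSpace ℝ (Fin n)) : ℝ :=
  ∫ y : EuclideanSpace ℝ (Fin n), (u x - u (x + y)) * μ (‖y‖⁻¹ • y) / ‖y‖ ^ ((n : ℝ) + s)

/-!
Suppose `w x₀ ≤ 0` for some `|x₀| ≤ r / 2`. Subtract from `w` the translate `β = b (· - x₀)` of a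
fixed bump `b`, supported in `B(x₀, r / 4)`, scaled by `c = 2 δ a`. Since `w ≥ -δ a`, the
function `w - c β` attains its global minimum at some `x₁ ∈ B(x₀, r / 4)`, where
`w x₁ ≤ w x₀ ≤ 0`. As `μ ≥ 0`, `L` is nonpositive at a global minimum, so
`a ≤ L w (x₁) ≤ c L β (x₁) ≤ 2 δ a C`, where `C` bounds `L` on all translates of `b`: split the
kernel integral at `|y| = 1`; near the origin the Lipschitz bound on `b` leaves the integrable
singularity `|y| ^ (1 - n - s)`, far away `0 ≤ b ≤ 1` leaves the integrable tail `|y| ^ (-n - s)`.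
Choosing `2 δ C < 1` gives a contradiction.
-/

section RadialPowers

variable {E : Type*} [NormedAddCommGroup E] [NormedSpace ℝ E] [FiniteDimensional ℝ E]
  [MeasurableSpace E] [BorelSpace E] {μ : Measure E} [μ.IsAddHaarMeasure]

theorem integrableOn_ball_norm_rpow (hd : 1 ≤ Module.finrank ℝ E) {t : ℝ}
    (ht : -(Module.finrank ℝ E : ℝ) < t) (r : ℝ) :
    IntegrableOn (fun y : E ↦ ‖y‖ ^ t) (ball 0 r) μ := by
  refine integrableOn_ball_of_norm_le_rpow (C := 1) (α := -t) hd (by linarith) ?_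
    (measurable_norm.pow_const t).aestronglyMeasurable
  refine .of_forall fun y ↦ ?_
  rw [neg_neg, one_mul, Real.norm_of_nonneg (by positivity)]

theorem integrableOn_compl_ball_norm_rpow {t : ℝ} (ht : t < -(Module.finrank ℝ E : ℝ)) :
    IntegrableOn (fun y : E ↦ ‖y‖ ^ t) (ball 0 1)ᶜ μ := by
  have hmaj : Integrable (fun y : E ↦ (2 : ℝ) ^ (-t) * (1 + ‖y‖) ^ (-(-t))) μ :=
    (integrable_one_add_norm (by linarith)).const_mul _
  refine hmaj.integrableOn.mono' (measurable_norm.pow_const t).aestronglyMeasurable.restrict ?_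
  refine (ae_restrict_iff' measurableSet_ball.compl).2 (.of_forall fun y hy ↦ ?_)
  have hy : 1 ≤ ‖y‖ := by simpa using hy
  have ht0 : t ≤ 0 := by linarith [(Module.finrank ℝ E).cast_nonneg (α := ℝ)]
  calc ‖‖y‖ ^ t‖ = ‖y‖ ^ t := Real.norm_of_nonneg (by positivity)
    _ ≤ ((1 + ‖y‖) / 2) ^ t := Real.rpow_le_rpow_of_nonpos (by positivity) (by linarith) ht0
    _ = (2 : ℝ) ^ (-t) * (1 + ‖y‖) ^ (-(-t)) := by
      rw [Real.div_rpow (by positivity) zero_le_two, Real.rpow_neg zero_le_two, neg_neg]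
      ring

end RadialPowers

theorem exists_isMinOn_sub_mul_bump {X : Type*} [PseudoMetricSpace X] [ProperSpace X]
    {w β : X → ℝ} (hw : Continuous w) (hβ : Continuous β) {x₀ : X} {ρ c m : ℝ} (hc : 0 ≤ c)
    (hβ_le : ∀ z, β z ≤ 1) (hβx₀ : β x₀ = 1) (hβ_zero : ∀ z ∉ closedBall x₀ ρ, β z = 0)
    (hm : ∀ z, m ≤ w z) (hx₀ : w x₀ ≤ m + c) :
    ∃ x₁ ∈ closedBall x₀ ρ, w x₁ ≤ w x₀ ∧ IsMinOn (fun z ↦ w z - c * β z) univ x₁ := by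
  have hx₀mem : x₀ ∈ closedBall x₀ ρ := by
    by_contra h
    simp [hβ_zero x₀ h] at hβx₀
  obtain ⟨x₁, hx₁, hmin⟩ := (isCompact_closedBall x₀ ρ).exists_isMinOn ⟨x₀, hx₀mem⟩
    (hw.sub (continuous_const.mul hβ)).continuousOn
  have hx₁x₀ : w x₁ - c * β x₁ ≤ w x₀ - c := by simpa [hβx₀] using hmin hx₀mem
  refine ⟨x₁, hx₁, by nlinarith [hβ_le x₁], fun z _ ↦ ?_⟩
  by_cases hz : z ∈ closedBall x₀ ρ
  · exact hmin hz
  · show w x₁ - c * β x₁ ≤ w z - c * β z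
    rw [hβ_zero z hz, mul_zero, sub_zero]
    linarith [hm z]

section Kernel

variable {n : ℕ} {s Λ : ℝ} {μ u v : EuclideanSpace ℝ (Fin n) → ℝ} {x : EuclideanSpace ℝ (Fin n)}
  {K : NNReal} {B M : ℝ}

noncomputable def opLmuIntegrand (n : ℕ) (s : ℝ) (μ u : EuclideanSpace ℝ (Fin n) → ℝ)
    (x y : EuclideanSpace ℝ (Fin n)) : ℝ :=
  (u x - u (x + y)) * μ (‖y‖⁻¹ • y) / ‖y‖ ^ ((n : ℝ) + s)

theorem opLmu_eq_integral : opLmu n s μ u x = ∫ y, opLmuIntegrand n s μ u x y := rfl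

theorem measurable_opLmuIntegrand (hμm : Measurable μ) (hu : Measurable u) :
    Measurable (opLmuIntegrand n s μ u x) := by
  unfold opLmuIntegrand
  fun_prop

theorem abs_opLmuIntegrand_le (hμ : ∀ θ, ‖θ‖ = 1 → |μ θ| ≤ Λ) (y : EuclideanSpace ℝ (Fin n)) :
    |opLmuIntegrand n s μ u x y| ≤ Λ * |u x - u (x + y)| / ‖y‖ ^ ((n : ℝ) + s) := by
  rcases eq_or_ne y 0 with rfl | hy
  · simp [opLmuIntegrand]
  rw [opLmuIntegrand, abs_div, abs_mul, abs_of_nonneg (Real.rpow_nonneg (norm_nonneg y) _),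
    mul_comm Λ]
  gcongr
  exact hμ _ (norm_smul_inv_norm (𝕜 := ℝ) hy)

theorem abs_opLmuIntegrand_le_of_lipschitzOnWith (hΛ : 0 ≤ Λ) (hμ : ∀ θ, ‖θ‖ = 1 → |μ θ| ≤ Λ)
    (hK : LipschitzOnWith K u (closedBall x 1)) {y : EuclideanSpace ℝ (Fin n)} (hy : ‖y‖ ≤ 1) :
    |opLmuIntegrand n s μ u x y| ≤ Λ * K * ‖y‖ ^ (1 - ((n : ℝ) + s)) := by
  rcases eq_or_ne y 0 with rfl | hy0
  · simp only [opLmuIntegrand, add_zero, sub_self, zero_mul, zero_div, abs_zero]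
    positivity
  have hLip : |u x - u (x + y)| ≤ K * ‖y‖ := by
    simpa [Real.dist_eq, dist_eq_norm] using
      hK.dist_le_mul x (mem_closedBall_self zero_le_one) (x + y) (by simpa using hy)
  calc |opLmuIntegrand n s μ u x y| ≤ Λ * |u x - u (x + y)| / ‖y‖ ^ ((n : ℝ) + s) :=
        abs_opLmuIntegrand_le hμ y
    _ ≤ Λ * (K * ‖y‖) / ‖y‖ ^ ((n : ℝ) + s) := by gcongr
    _ = Λ * K * ‖y‖ ^ (1 - ((n : ℝ) + s)) := by
      rw [Real.rpow_sub (norm_pos_iff.2 hy0), Real.rpow_one]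
      ring

theorem abs_opLmuIntegrand_le_of_abs_sub_le (hΛ : 0 ≤ Λ) (hμ : ∀ θ, ‖θ‖ = 1 → |μ θ| ≤ Λ)
    (hB : ∀ y, |u x - u (x + y)| ≤ B) (y : EuclideanSpace ℝ (Fin n)) :
    |opLmuIntegrand n s μ u x y| ≤ Λ * B * ‖y‖ ^ (-((n : ℝ) + s)) :=
  calc |opLmuIntegrand n s μ u x y| ≤ Λ * |u x - u (x + y)| / ‖y‖ ^ ((n : ℝ) + s) :=
        abs_opLmuIntegrand_le hμ y
    _ ≤ Λ * B / ‖y‖ ^ ((n : ℝ) + s) := by gcongr; exact hB y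
    _ = Λ * B * ‖y‖ ^ (-((n : ℝ) + s)) := by rw [Real.rpow_neg (norm_nonneg y), div_eq_mul_inv]

theorem integrableOn_ball_norm_rpow_one_sub (hn : 0 < n) (hs : s < 1) :
    IntegrableOn (fun y : EuclideanSpace ℝ (Fin n) ↦ ‖y‖ ^ (1 - ((n : ℝ) + s))) (ball 0 1) :=
  integrableOn_ball_norm_rpow (by simp; omega) (by simp; linarith) 1

theorem integrableOn_compl_ball_norm_rpow_neg (hs : 0 < s) :
    IntegrableOn (fun y : EuclideanSpace ℝ (Fin n) ↦ ‖y‖ ^ (-((n : ℝ) + s))) (ball 0 1)ᶜ :=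
  integrableOn_compl_ball_norm_rpow (by simp; linarith)

theorem integrable_opLmuIntegrand (hn : 0 < n) (hs0 : 0 < s) (hs1 : s < 1) (hμm : Measurable μ)
    (hΛ : 0 ≤ Λ) (hμ : ∀ θ, ‖θ‖ = 1 → |μ θ| ≤ Λ) (hu : Measurable u)
    (hK : LipschitzOnWith K u (closedBall x 1)) (hB : ∀ y, |u x - u (x + y)| ≤ B) :
    Integrable (opLmuIntegrand n s μ u x) := by
  have hf : AEStronglyMeasurable (opLmuIntegrand n s μ u x) volume :=
    (measurable_opLmuIntegrand hμm hu).aestronglyMeasurable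
  have hball : IntegrableOn (opLmuIntegrand n s μ u x) (ball 0 1) :=
    ((integrableOn_ball_norm_rpow_one_sub hn hs1).const_mul (Λ * K)).mono' hf.restrict <|
      (ae_restrict_iff' measurableSet_ball).2 <| .of_forall fun y hy ↦
        abs_opLmuIntegrand_le_of_lipschitzOnWith hΛ hμ hK (mem_ball_zero_iff.1 hy).le
  have hcompl : IntegrableOn (opLmuIntegrand n s μ u x) (ball 0 1)ᶜ :=
    ((integrableOn_compl_ball_norm_rpow_neg hs0).const_mul (Λ * B)).mono' hf.restrict <|
      .of_forall (abs_opLmuIntegrand_le_of_abs_sub_le hΛ hμ hB)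
  simpa using hball.union hcompl

theorem abs_opLmu_le (hn : 0 < n) (hs0 : 0 < s) (hs1 : s < 1) (hμm : Measurable μ)
    (hΛ : 0 ≤ Λ) (hμ : ∀ θ, ‖θ‖ = 1 → |μ θ| ≤ Λ) (hu : Measurable u)
    (hK : LipschitzOnWith K u (closedBall x 1)) (hB : ∀ y, |u x - u (x + y)| ≤ B) :
    |opLmu n s μ u x| ≤
      Λ * (K * (∫ y in ball (0 : EuclideanSpace ℝ (Fin n)) 1, ‖y‖ ^ (1 - ((n : ℝ) + s))) +
        B * ∫ y in (ball (0 : EuclideanSpace ℝ (Fin n)) 1)ᶜ, ‖y‖ ^ (-((n : ℝ) + s))) := by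
  set U := ball (0 : EuclideanSpace ℝ (Fin n)) 1
  rw [opLmu_eq_integral, ← integral_add_compl (s := U) measurableSet_ball
    (integrable_opLmuIntegrand hn hs0 hs1 hμm hΛ hμ hu hK hB)]
  have hball : ‖∫ y in U, opLmuIntegrand n s μ u x y‖ ≤
      ∫ y in U, Λ * K * ‖y‖ ^ (1 - ((n : ℝ) + s)) :=
    norm_integral_le_of_norm_le ((integrableOn_ball_norm_rpow_one_sub hn hs1).const_mul _) <|
      (ae_restrict_iff' measurableSet_ball).2 <| .of_forall fun y hy ↦
        abs_opLmuIntegrand_le_of_lipschitzOnWith hΛ hμ hK (mem_ball_zero_iff.1 hy).le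
  have hcompl : ‖∫ y in Uᶜ, opLmuIntegrand n s μ u x y‖ ≤
      ∫ y in Uᶜ, Λ * B * ‖y‖ ^ (-((n : ℝ) + s)) :=
    norm_integral_le_of_norm_le ((integrableOn_compl_ball_norm_rpow_neg hs0).const_mul _) <|
      .of_forall (abs_opLmuIntegrand_le_of_abs_sub_le hΛ hμ hB)
  rw [Real.norm_eq_abs, integral_const_mul] at hball hcompl
  linarith [abs_add_le (∫ y in U, opLmuIntegrand n s μ u x y)
    (∫ y in Uᶜ, opLmuIntegrand n s μ u x y)]

theorem integrable_opLmuIntegrand_of_contDiff (hn : 0 < n) (hs0 : 0 < s) (hs1 : s < 1)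
    (hμm : Measurable μ) (hΛ : 0 ≤ Λ) (hμ : ∀ θ, ‖θ‖ = 1 → |μ θ| ≤ Λ) (hu : ContDiff ℝ 1 u)
    (hM : ∀ z, |u z| ≤ M) : Integrable (opLmuIntegrand n s μ u x) := by
  obtain ⟨K, hK⟩ := hu.locallyLipschitz.locallyLipschitzOn.exists_lipschitzOnWith_of_compact
    (isCompact_closedBall x 1)
  exact integrable_opLmuIntegrand hn hs0 hs1 hμm hΛ hμ hu.continuous.measurable hK
    fun y ↦ (abs_sub _ _).trans (add_le_add (hM x) (hM (x + y)))

theorem opLmu_sub_mul (hu : Integrable (opLmuIntegrand n s μ u x))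
    (hv : Integrable (opLmuIntegrand n s μ v x)) (c : ℝ) :
    opLmu n s μ (fun z ↦ u z - c * v z) x = opLmu n s μ u x - c * opLmu n s μ v x := by
  simp only [opLmu_eq_integral]
  rw [← integral_const_mul, ← integral_sub hu (hv.const_mul c)]
  congr 1 with y
  simp only [opLmuIntegrand]
  ring

theorem opLmu_nonpos_of_isMinOn (hμ0 : ∀ θ, ‖θ‖ = 1 → 0 ≤ μ θ) (hx : IsMinOn u univ x) :
    opLmu n s μ u x ≤ 0 := by
  refine integral_nonpos fun y ↦ ?_
  rcases eq_or_ne y 0 with rfl | hy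
  · simp
  exact div_nonpos_of_nonpos_of_nonneg
    (mul_nonpos_of_nonpos_of_nonneg (sub_nonpos.2 (hx (mem_univ _)))
      (hμ0 _ (norm_smul_inv_norm (𝕜 := ℝ) hy)))
    (Real.rpow_nonneg (norm_nonneg y) _)

theorem exists_abs_opLmu_bump_le (hn : 0 < n) (hs0 : 0 < s) (hs1 : s < 1) (hμm : Measurable μ)
    (hΛ : 0 ≤ Λ) (hμ : ∀ θ, ‖θ‖ = 1 → |μ θ| ≤ Λ)
    (b : ContDiffBump (0 : EuclideanSpace ℝ (Fin n))) :
    ∃ C, ∀ x₀ x, |opLmu n s μ (fun z ↦ b (z - x₀)) x| ≤ C := by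
  obtain ⟨K, hK⟩ := ContDiff.lipschitzWith_of_hasCompactSupport b.hasCompactSupport
    (b.contDiff (n := 1)) one_ne_zero
  exact ⟨_, fun x₀ x ↦ abs_opLmu_le hn hs0 hs1 hμm hΛ hμ
    (b.continuous.measurable.comp (measurable_id.sub_const x₀))
    (hK.comp (IsometryEquiv.subRight x₀).isometry.lipschitz).lipschitzOnWith
    fun y ↦ abs_sub_le_of_nonneg_of_le b.nonneg b.le_one b.nonneg b.le_one⟩

theorem exists_opLmu_le_mul_opLmu_bump (hn : 0 < n) (hs0 : 0 < s) (hs1 : s < 1)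
    (hμm : Measurable μ) (hΛ : 0 ≤ Λ) (hμ : ∀ θ, ‖θ‖ = 1 → |μ θ| ≤ Λ)
    (hμ0 : ∀ θ, ‖θ‖ = 1 → 0 ≤ μ θ) (hu : ContDiff ℝ 1 u) (hM : ∀ z, |u z| ≤ M)
    (b : ContDiffBump (0 : EuclideanSpace ℝ (Fin n))) {x₀ : EuclideanSpace ℝ (Fin n)} {c m : ℝ}
    (hc : 0 ≤ c) (hm : ∀ z, m ≤ u z) (hx₀ : u x₀ ≤ m + c) :
    ∃ x₁ ∈ closedBall x₀ b.rOut, u x₁ ≤ u x₀ ∧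
      opLmu n s μ u x₁ ≤ c * opLmu n s μ (fun z ↦ b (z - x₀)) x₁ := by
  set β : EuclideanSpace ℝ (Fin n) → ℝ := fun z ↦ b (z - x₀)
  have hβ : ContDiff ℝ 1 β := b.contDiff.comp (contDiff_id.sub contDiff_const)
  obtain ⟨x₁, hx₁, hu₁, hmin⟩ := exists_isMinOn_sub_mul_bump hu.continuous hβ.continuous hc
    (fun z ↦ b.le_one)
    (by simpa [β] using b.one_of_mem_closedBall (mem_closedBall_self b.rIn_pos.le))
    (fun z hz ↦ b.zero_of_le_dist (by simpa [dist_eq_norm] using (not_le.1 hz).le)) hm hx₀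
  refine ⟨x₁, hx₁, hu₁, ?_⟩
  rw [← sub_nonpos, ← opLmu_sub_mul
    (integrable_opLmuIntegrand_of_contDiff hn hs0 hs1 hμm hΛ hμ hu hM)
    (integrable_opLmuIntegrand_of_contDiff hn hs0 hs1 hμm hΛ hμ hβ
      (fun z ↦ abs_le.2 ⟨by linarith [b.nonneg (x := z - x₀)], b.le_one⟩))]
  exact opLmu_nonpos_of_isMinOn hμ0 hmin

end Kernel

theorem barrier_maximum_principle_general
    (n : ℕ) (hn : 2 ≤ n) (s : ℝ) (hs : s ∈ Set.Ioo (0:ℝ) 1)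
    (μ : EuclideanSpace ℝ (Fin n) → ℝ) (hμmeas : Measurable μ)
    (lam Lam : ℝ) (hlam : 0 < lam) (hLam : lam ≤ Lam)
    (hμbound : ∀ θ : EuclideanSpace ℝ (Fin n), ‖θ‖ = 1 → μ θ ∈ Set.Icc lam Lam)
    (r : ℝ) (hr : 0 < r) :
    ∃ δ : ℝ, 0 < δ ∧
      ∀ a : ℝ, 0 < a →
      ∀ w : EuclideanSpace ℝ (Fin n) → ℝ, ContDiff ℝ 1 w → (∃ M, ∀ x, |w x| ≤ M) →
      (∀ x ∈ Metric.ball (0 : EuclideanSpace ℝ (Fin n)) r, w x ≤ 0 → a ≤ opLmu n s μ w x) →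
      (∀ x, -(δ * a) ≤ w x) →
      ∀ x ∈ Metric.closedBall (0 : EuclideanSpace ℝ (Fin n)) (r / 2), 0 < w x := by
  obtain ⟨hs0, hs1⟩ := hs
  have hn0 : 0 < n := by omega
  have hΛ : 0 ≤ Lam := hlam.le.trans hLam
  have hμ0 (θ) (hθ : ‖θ‖ = 1) : 0 ≤ μ θ := hlam.le.trans (hμbound θ hθ).1
  have hμ (θ) (hθ : ‖θ‖ = 1) : |μ θ| ≤ Lam := abs_le.2 ⟨by linarith [hμ0 θ hθ], (hμbound θ hθ).2⟩
  let b : ContDiffBump (0 : EuclideanSpace ℝ (Fin n)) := ⟨r / 8, r / 4, by positivity, by linarith⟩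
  obtain ⟨C, hC⟩ := exists_abs_opLmu_bump_le hn0 hs0 hs1 hμmeas hΛ hμ b
  obtain ⟨δ, hδ, hδC⟩ : ∃ δ : ℝ, 0 < δ ∧ 2 * δ * C < 1 := by
    have hC0 : 0 ≤ C := (abs_nonneg _).trans (hC 0 0)
    exact ⟨1 / (4 * (C + 1)), by positivity, by field_simp; linarith⟩
  refine ⟨δ, hδ, fun a ha w hw ⟨M, hM⟩ hLw hlow x₀ hx₀ ↦ ?_⟩
  by_contra! hwx₀
  obtain ⟨x₁, hx₁, hw₁, hLw₁⟩ := exists_opLmu_le_mul_opLmu_bump hn0 hs0 hs1 hμmeas hΛ hμ hμ0 hw hM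
    b (c := 2 * (δ * a)) (by positivity) hlow (by linarith [mul_pos hδ ha])
  have hx₁r : x₁ ∈ ball 0 r := by
    rw [mem_ball]
    linarith [dist_triangle x₁ x₀ 0, (mem_closedBall.1 hx₁ : dist x₁ x₀ ≤ r / 4),
      mem_closedBall.1 hx₀]
  have : a ≤ 2 * δ * C * a := calc
    a ≤ opLmu n s μ w x₁ := hLw x₁ hx₁r (hw₁.trans hwx₀)
    _ ≤ 2 * (δ * a) * C := hLw₁.trans (by gcongr; exact (abs_le.1 (hC x₀ x₁)).2)
    _ = 2 * δ * C * a := by ring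
  nlinarith

/-- a barrier-type maximum principle. For every `r > 0` there is `δ > 0`
(depending only on `n`, `s`, the ellipticity constants and `r`) such that: for every `a > 0`
and every bounded `C¹` function `w` with `Lw ≥ a` on `B_r ∩ {w ≤ 0}` and `w ≥ -δa` on `ℝⁿ`,
one has `w > 0` on the closed ball of radius `r/2`. -/
theorem barrier_maximum_principle
    (n : ℕ) (hn : 2 ≤ n) (s : ℝ) (hs : s ∈ Set.Ioo (0:ℝ) 1)
    (μ : EuclideanSpace ℝ (Fin n) → ℝ) (hμmeas : Measurable μ)
    (lam Lam : ℝ) (hlam : 0 < lam) (hLam : lam ≤ Lam)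
    (hμsymm : ∀ θ : EuclideanSpace ℝ (Fin n), ‖θ‖ = 1 → μ (-θ) = μ θ)
    (hμbound : ∀ θ : EuclideanSpace ℝ (Fin n), ‖θ‖ = 1 → μ θ ∈ Set.Icc lam Lam)
    (r : ℝ) (hr : 0 < r) :
    ∃ δ : ℝ, 0 < δ ∧
      ∀ a : ℝ, 0 < a →
      ∀ w : EuclideanSpace ℝ (Fin n) → ℝ, ContDiff ℝ 1 w → (∃ M, ∀ x, |w x| ≤ M) →
      (∀ x ∈ Metric.ball (0 : EuclideanSpace ℝ (Fin n)) r, w x ≤ 0 → a ≤ opLmu n s μ w x) →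
      (∀ x, -(δ * a) ≤ w x) →
      ∀ x ∈ Metric.closedBall (0 : EuclideanSpace ℝ (Fin n)) (r / 2), 0 < w x :=
  barrier_maximum_principle_general n hn s hs μ hμmeas lam Lam hlam hLam hμbound r hr
end

section
/- Let α ∈ (0,1) and n ≥ 1. There exists C > 0, depending only on α, such that the following holds. Let a ∈ (0,1), set j_a := ⌊log a / log(2^{−α})⌋, let X ⊆ ℝⁿ, and let ω₀, ω₁, …, ω_{j_a} ∈ S^{n−1} be such that for every j ∈ {0,…,j_a}: {x : x·ω_j ≤ −a 2^{j(1+α)}} ⊆ X ⊆ {x : x·ω_j ≤ a 2^{j(1+α)}} in B_{2^j}. Then |ω_j − ω₀| ≤ C a 2^{jα} for every j ∈ {0,…,j_a}, and for every j ∈ {0,…,j_a}: {x : x·ω₀ ≤ −C a 2^{j(1+α)}} ⊆ X ⊆ {x : x·ω₀ ≤ C a 2^{j(1+α)}} in B_{2^j}. -/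
open MeasureTheory Set Metric Filter

/-- `j_a := ⌊ log a / log (2^{-α}) ⌋`. -/
noncomputable def jIdx (α a : ℝ) : ℤ := ⌊Real.log a / Real.log ((2:ℝ) ^ (-α))⌋

/-!
If `X` is trapped in a slab of half-width `δ` about the hyperplane `ω^⊥` inside `B_r`, and also in
one about `ω'^⊥`, then the half-space `{⟪x, ω⟫ ≤ -δ}` lies in `{⟪x, ω'⟫ ≤ δ}` inside `B_r`;
testing this at a point of norm `≈ r/2` in the direction `ω' - ω` gives `‖ω' - ω‖ ≤ 8δ/r`.
Comparing consecutive dyadic scales this way gives `|ω_{i+1} - ω_i| ≤ 16 a 2^{(i+1)α}`, a geometric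
series summing to `|ω_j - ω₀| ≲ a 2^{jα} / (1 - 2^{-α})`, and tilting the slab at scale `2^j` from
`ω_j` to `ω₀` widens it by `2^j |ω_j - ω₀|`. Once `a 2^{jα} ≥ 1/4` everything is trivial, since the
slabs then contain the whole ball.
-/

open scoped RealInnerProductSpace

section

variable {E : Type*} [NormedAddCommGroup E] [InnerProductSpace ℝ E]

theorem two_mul_real_inner_sub_self_of_norm_eq {u v : E} (h : ‖u‖ = ‖v‖) :
    2 * ⟪v - u, v⟫ = ‖v - u‖ ^ 2 := by
  rw [norm_sub_sq_real, inner_sub_left, real_inner_self_eq_norm_sq, real_inner_comm, h]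
  ring

theorem norm_sub_le_of_halfSpace_inter_ball_subset {u v : E} (hu : ‖u‖ = 1) (hv : ‖v‖ = 1)
    {δ r : ℝ} (hδ : 0 ≤ δ) (hδr : δ < r / 2)
    (h : {x | ⟪x, u⟫ ≤ -δ} ∩ ball 0 r ⊆ {x | ⟪x, v⟫ ≤ δ}) :
    ‖v - u‖ ≤ 8 * δ / r := by
  have hr : 0 < r := by linarith
  set d := v - u
  rcases eq_or_ne d 0 with hd | hd
  · rw [hd, norm_zero]; positivity
  have hd0 : 0 < ‖d‖ := norm_pos_iff.2 hd
  have hdv : 2 * ⟪d, v⟫ = ‖d‖ ^ 2 := two_mul_real_inner_sub_self_of_norm_eq (hu.trans hv.symm)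
  have hdu : 2 * ⟪d, u⟫ = -‖d‖ ^ 2 := by
    have := two_mul_real_inner_sub_self_of_norm_eq (hv.trans hu.symm)
    rw [← neg_sub, inner_neg_left, norm_neg] at this
    linarith
  have huv : ⟪u, v⟫ ≤ 1 := by
    simpa [hu, hv] using real_inner_le_norm u v
  -- test point `t • d - δ • u`: norm `≤ r / 2 + δ < r`, and `⟪·, v⟫ ≥ r‖d‖ / 4 - δ`
  set t := r / (2 * ‖d‖)
  have ht : t * ‖d‖ = r / 2 := by
    rw [div_mul_eq_mul_div]; exact mul_div_mul_right r 2 hd0.ne'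
  have htu : t * ⟪d, u⟫ = -(r * ‖d‖ / 4) := by linear_combination (t / 2) * hdu - (‖d‖ / 2) * ht
  have htv : t * ⟪d, v⟫ = r * ‖d‖ / 4 := by linear_combination (t / 2) * hdv + (‖d‖ / 2) * ht
  have hx := @h (t • d - δ • u) ⟨?_, ?_⟩
  · simp only [mem_ofPred_eq, inner_sub_left, real_inner_smul_left, htv] at hx
    have : δ * ⟪u, v⟫ ≤ δ := mul_le_of_le_one_right hδ huv
    rw [le_div_iff₀ hr]
    linarith [mul_comm r ‖d‖]
  · simp only [mem_ofPred_eq, inner_sub_left, real_inner_smul_left, real_inner_self_eq_norm_sq, hu,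
      htu]
    nlinarith
  · rw [mem_ball_zero_iff]
    calc ‖t • d - δ • u‖ ≤ ‖t • d‖ + ‖δ • u‖ := norm_sub_le _ _
      _ = r / 2 + δ := by
        rw [norm_smul, norm_smul, Real.norm_of_nonneg (by positivity), Real.norm_of_nonneg hδ, hu,
          mul_one, ht]
      _ < r := by linarith

def TrappedInSlab (X : Set E) (ω : E) (δ r : ℝ) : Prop :=
  {x | ⟪x, ω⟫ ≤ -δ} ∩ ball 0 r ⊆ X ∧ X ∩ ball 0 r ⊆ {x | ⟪x, ω⟫ ≤ δ}

namespace TrappedInSlab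

variable {X : Set E} {ω ω' : E} {δ δ' r r' : ℝ}

theorem mono (h : TrappedInSlab X ω δ r) (hδ : δ ≤ δ') (hr : r' ≤ r) :
    TrappedInSlab X ω δ' r' :=
  ⟨fun _ ⟨hxω, hxr⟩ => h.1 ⟨le_trans hxω (neg_le_neg hδ), ball_subset_ball hr hxr⟩,
    fun _ ⟨hxX, hxr⟩ => le_trans (h.2 ⟨hxX, ball_subset_ball hr hxr⟩) hδ⟩

theorem norm_sub_le (hω : ‖ω‖ = 1) (hω' : ‖ω'‖ = 1) (h : TrappedInSlab X ω δ r)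
    (h' : TrappedInSlab X ω' δ r) (hδ : 0 ≤ δ) (hδr : δ < r / 2) :
    ‖ω' - ω‖ ≤ 8 * δ / r :=
  norm_sub_le_of_halfSpace_inter_ball_subset hω hω' hδ hδr fun _ hx => h'.2 ⟨h.1 hx, hx.2⟩

theorem of_norm_sub_le {ε : ℝ} (h : TrappedInSlab X ω δ r) (hε : ‖ω' - ω‖ ≤ ε) :
    TrappedInSlab X ω' (δ + r * ε) r := by
  have hclose : ∀ x ∈ ball (0 : E) r, |⟪x, ω'⟫ - ⟪x, ω⟫| ≤ r * ε := fun x hx => by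
    rw [← inner_sub_right]
    have hx := mem_ball_zero_iff.1 hx
    exact (abs_real_inner_le_norm _ _).trans
      (mul_le_mul hx.le hε (norm_nonneg _) ((norm_nonneg x).trans hx.le))
  refine ⟨fun x ⟨hxω, hxr⟩ => h.1 ⟨?_, hxr⟩, fun x ⟨hxX, hxr⟩ => ?_⟩
  · show ⟪x, ω⟫ ≤ -δ
    linarith [(abs_le.1 (hclose x hxr)).1, show ⟪x, ω'⟫ ≤ -(δ + r * ε) from hxω]
  · show ⟪x, ω'⟫ ≤ δ + r * ε
    linarith [(abs_le.1 (hclose x hxr)).2, show ⟪x, ω⟫ ≤ δ from h.2 ⟨hxX, hxr⟩]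

theorem of_radius_le (hω : ‖ω‖ = 1) (hr : r ≤ δ) : TrappedInSlab X ω δ r := by
  have hbound : ∀ x ∈ ball (0 : E) r, |⟪x, ω⟫| < δ := fun x hx => by
    have := abs_real_inner_le_norm x ω
    rw [hω, mul_one] at this
    exact this.trans_lt ((mem_ball_zero_iff.1 hx).trans_le hr)
  exact ⟨fun x ⟨hxω, hxr⟩ => absurd hxω (not_le.2 (neg_lt_of_abs_lt (hbound x hxr))),
    fun x ⟨_, hxr⟩ => (le_abs_self _).trans (hbound x hxr).le⟩

end TrappedInSlab

section Dyadic

variable {X : Set E} {ω : ℕ → E} {a β : ℝ} {j : ℕ}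

theorem norm_sub_le_of_trappedInSlab_dyadic (hβ : 1 < β) (ha : 0 ≤ a) (hsmall : a * β ^ j < 1 / 4)
    (hω : ∀ i ≤ j, ‖ω i‖ = 1) (hX : ∀ i ≤ j, TrappedInSlab X (ω i) (a * (2 * β) ^ i) (2 ^ i)) :
    ‖ω j - ω 0‖ ≤ 16 * β / (β - 1) * (a * β ^ j) := by
  have hstep : ∀ i < j, dist (ω i) (ω (i + 1)) ≤ 16 * a * β ^ (i + 1) := by
    intro i hi
    have hδ : a * (2 * β) ^ i ≤ a * (2 * β) ^ (i + 1) := by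
      gcongr
      · linarith
      · omega
    have hsmall' : a * β ^ (i + 1) < 1 / 4 :=
      (mul_le_mul_of_nonneg_left (pow_le_pow_right₀ hβ.le hi) ha).trans_lt hsmall
    have hδr : a * (2 * β) ^ (i + 1) < 2 ^ i / 2 :=
      calc a * (2 * β) ^ (i + 1) = 2 ^ i * (2 * (a * β ^ (i + 1))) := by ring
        _ < 2 ^ i * (2 * (1 / 4)) := by gcongr
        _ = 2 ^ i / 2 := by ring
    have h := ((hX i hi.le).mono hδ le_rfl).norm_sub_le (hω i hi.le) (hω (i + 1) hi)
      ((hX (i + 1) hi).mono le_rfl (pow_le_pow_right₀ one_le_two i.le_succ)) (by positivity)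
      hδr
    rw [dist_comm, dist_eq_norm]
    convert h using 1
    rw [mul_pow, pow_succ 2]
    field_simp
    ring
  have hgeom : ∑ i ∈ Finset.range j, β ^ i ≤ β ^ j / (β - 1) := by
    rw [geom_sum_eq hβ.ne']
    exact div_le_div_of_nonneg_right (by linarith) (by linarith)
  calc ‖ω j - ω 0‖ = dist (ω 0) (ω j) := by rw [dist_comm, dist_eq_norm]
    _ ≤ ∑ i ∈ Finset.range j, dist (ω i) (ω (i + 1)) := dist_le_range_sum_dist ω j
    _ ≤ ∑ i ∈ Finset.range j, 16 * a * β ^ (i + 1) :=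
      Finset.sum_le_sum fun i hi => hstep i (Finset.mem_range.1 hi)
    _ = 16 * a * β * ∑ i ∈ Finset.range j, β ^ i := by
      rw [Finset.mul_sum]
      exact Finset.sum_congr rfl fun i _ => by ring
    _ ≤ 16 * a * β * (β ^ j / (β - 1)) := by gcongr
    _ = 16 * β / (β - 1) * (a * β ^ j) := by ring

theorem norm_sub_le_and_trappedInSlab_zero_of_dyadic (hβ : 1 < β) (ha : 0 ≤ a)
    (hω : ∀ i ≤ j, ‖ω i‖ = 1)
    (hX : ∀ i ≤ j, TrappedInSlab X (ω i) (a * (2 * β) ^ i) (2 ^ i)) :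
    ‖ω j - ω 0‖ ≤ (8 + 16 * β / (β - 1)) * a * β ^ j ∧
      TrappedInSlab X (ω 0) ((8 + 16 * β / (β - 1)) * a * (2 * β) ^ j) (2 ^ j) := by
  set K := 16 * β / (β - 1)
  have hK : 0 ≤ K := div_nonneg (by positivity) (by linarith)
  have haβ : 0 ≤ a * β ^ j := by positivity
  have h2j : (0 : ℝ) < 2 ^ j := by positivity
  rcases lt_or_ge (a * β ^ j) (1 / 4) with hsmall | hlarge
  · have hclose := norm_sub_le_of_trappedInSlab_dyadic hβ ha hsmall hω hX
    refine ⟨hclose.trans (by nlinarith), ?_⟩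
    refine ((hX j le_rfl).of_norm_sub_le ((norm_sub_rev _ _).trans_le hclose)).mono ?_ le_rfl
    rw [mul_pow]
    nlinarith [mul_nonneg h2j.le haβ]
  · refine ⟨?_, TrappedInSlab.of_radius_le (hω 0 j.zero_le) ?_⟩
    · calc ‖ω j - ω 0‖ ≤ ‖ω j‖ + ‖ω 0‖ := norm_sub_le _ _
        _ = 2 := by rw [hω j le_rfl, hω 0 j.zero_le]; norm_num
        _ ≤ (8 + K) * a * β ^ j := by nlinarith
    · rw [mul_pow]
      nlinarith [mul_nonneg h2j.le haβ]

end Dyadic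

end

/-- if a set is trapped in a sequence of slabs (with varying orientations) in
dyadic balls, then it is trapped in a sequence of parallel slabs, with a quantitative control
`|ω_j − ω₀| ≤ C a 2^{jα}` on the orientations. The constant `C` depends only on `α`. -/
theorem geometric_slab_lemma (α : ℝ) (hα : α ∈ Set.Ioo (0:ℝ) 1) :
    ∃ C : ℝ, 0 < C ∧
      ∀ (n : ℕ), 1 ≤ n →
      ∀ a : ℝ, a ∈ Set.Ioo (0:ℝ) 1 →
      ∀ X : Set (EuclideanSpace ℝ (Fin n)),
      ∀ ω : ℕ → EuclideanSpace ℝ (Fin n),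
      (∀ j : ℕ, (j : ℤ) ≤ jIdx α a → ‖ω j‖ = 1) →
      (∀ j : ℕ, (j : ℤ) ≤ jIdx α a →
        ({x : EuclideanSpace ℝ (Fin n) | (inner ℝ x (ω j) : ℝ) ≤ -(a * 2 ^ ((j:ℝ) * (1 + α)))}
            ∩ Metric.ball 0 (2 ^ j) ⊆ X) ∧
        (X ∩ Metric.ball 0 (2 ^ j)
            ⊆ {x : EuclideanSpace ℝ (Fin n) | (inner ℝ x (ω j) : ℝ) ≤ a * 2 ^ ((j:ℝ) * (1 + α))})) →
      ∀ j : ℕ, (j : ℤ) ≤ jIdx α a →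
        ‖ω j - ω 0‖ ≤ C * a * 2 ^ ((j:ℝ) * α) ∧
        ({x : EuclideanSpace ℝ (Fin n) | (inner ℝ x (ω 0) : ℝ) ≤ -(C * a * 2 ^ ((j:ℝ) * (1 + α)))}
            ∩ Metric.ball 0 (2 ^ j) ⊆ X) ∧
        (X ∩ Metric.ball 0 (2 ^ j)
            ⊆ {x : EuclideanSpace ℝ (Fin n) | (inner ℝ x (ω 0) : ℝ) ≤ C * a * 2 ^ ((j:ℝ) * (1 + α))}) := by
  have hβ : 1 < (2 : ℝ) ^ α := Real.one_lt_rpow one_lt_two hα.1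
  have hrpow : ∀ (i : ℕ) (γ : ℝ), (2 : ℝ) ^ ((i : ℝ) * γ) = (2 ^ γ) ^ i := fun i γ => by
    rw [mul_comm, Real.rpow_mul zero_le_two, Real.rpow_natCast]
  have hrpow' : ∀ i : ℕ, (2 : ℝ) ^ ((i : ℝ) * (1 + α)) = (2 * 2 ^ α) ^ i := fun i => by
    rw [hrpow, Real.rpow_add two_pos, Real.rpow_one]
  refine ⟨8 + 16 * 2 ^ α / (2 ^ α - 1), ?_, ?_⟩
  · have := div_pos (by positivity : (0 : ℝ) < 16 * 2 ^ α) (sub_pos.2 hβ)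
    linarith
  rintro n - a ha X ω hω hX j hj
  have hle : ∀ i ≤ j, (i : ℤ) ≤ jIdx α a := fun i hi => le_trans (by exact_mod_cast hi) hj
  have hX' : ∀ i ≤ j, TrappedInSlab X (ω i) (a * (2 * 2 ^ α) ^ i) (2 ^ i) := fun i hi => by
    have := hX i (hle i hi)
    rwa [hrpow'] at this
  rw [hrpow, hrpow']
  exact norm_sub_le_and_trappedInSlab_zero_of_dyadic hβ ha.1.le (fun i hi => hω i (hle i hi)) hX'
end
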